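/- Let k ≥ 1 and let η be a configuration whose set of unstable sites is finite and nonempty, with I(η) unstable sites. Then E[I(R^k(η))] ≤ ( (1/3) p_k^{III} + (2/3) p_k^I + (1/3) max_{1 ≤ g ≤ 4k} Σ_{i=1}^{g} p_k^S(i−1, g−i) ) · I(η), where I(ξ) denotes the number of unstable sites of a configuration ξ. -/

import Mathlib

open MeasureTheory ENNReal
open scoped Classical

/-- A configuration: a coloring of `ℤ` with the two colors coded by `Bool`. -/
abbrev Config := ℤ → Bool

/-- A site `x` is unstable in `η` iff it lies in a monochromatic chain of length (at least) 3,
i.e. there is `y ∈ {x-2, x-1, x}` with `η y = η (y+1) = η (y+2)`. Spelled out explicitly. -/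
def Unstable (η : Config) (x : ℤ) : Prop :=
  (η (x - 2) = η (x - 1) ∧ η (x - 1) = η x) ∨
  (η (x - 1) = η x ∧ η x = η (x + 1)) ∨
  (η x = η (x + 1) ∧ η (x + 1) = η (x + 2))

instance (η : Config) (x : ℤ) : Decidable (Unstable η x) := by
  unfold Unstable; infer_instance

/-- One step of the dynamics: stable sites keep their color, unstable ones are recolored
using the fresh colors `c`. -/
def update (η : Config) (c : ℤ → Bool) : Config :=
  fun x => if Unstable η x then c x else η x

/-- `evolve ω η k = R^k(η)`: the configuration after `k` steps, where the simultaneous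
recoloring at step `j` uses the fresh colors `ω j`. -/
def evolve (ω : ℕ → ℤ → Bool) (η : Config) : ℕ → Config
  | 0 => η
  | k + 1 => update (evolve ω η k) (ω k)

/-- `μ` makes the coordinates of the coin field i.i.d. uniform on the two colors:
every finite cylinder event has probability `(1/2)^(number of coordinates)`. -/
def IIDCoins (μ : Measure (ℕ → ℤ → Bool)) : Prop :=
  ∀ (S : Finset (ℕ × ℤ)) (f : ℕ × ℤ → Bool),
    μ {ω | ∀ p ∈ S, ω p.1 p.2 = f p} = (1 / 2 : ℝ≥0∞) ^ S.card

/-- The number of unstable sites of a configuration. -/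
noncomputable def numUnstable (η : Config) : ℕ∞ := {x : ℤ | Unstable η x}.encard

/-- `p_k^I`: sup over configurations `η` with site `0` unstable of `P(σ_{R^k(η)}(0) = 0)`. -/
noncomputable def pI (μ : Measure (ℕ → ℤ → Bool)) (k : ℕ) : ℝ≥0∞ :=
  ⨆ (η : Config) (_ : Unstable η 0), μ {ω | Unstable (evolve ω η k) 0}

/-- `p_k^{III}`: sup over configurations `η` with sites `-1, 0, 1` all unstable of
`P(σ_{R^k(η)}(0) = 0)`. -/
noncomputable def pIII (μ : Measure (ℕ → ℤ → Bool)) (k : ℕ) : ℝ≥0∞ :=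
  ⨆ (η : Config) (_ : Unstable η (-1) ∧ Unstable η 0 ∧ Unstable η 1),
    μ {ω | Unstable (evolve ω η k) 0}

/-- The conditioning event of `p_k^S(n,m)` (at site `0`): all sites `i` with `-n ≤ i ≤ m`
are stable, and the boundary sites `-n-1` (if `n` is finite) and `m+1` (if `m` is finite)
are unstable.  The inequality `-n ≤ i ≤ m` in `ℕ∞` is coded using `Int.toNat`. -/
def SWindow (η : Config) (n m : ℕ∞) : Prop :=
  (∀ i : ℤ, (((-i).toNat : ℕ∞) ≤ n) → ((i.toNat : ℕ∞) ≤ m) → ¬ Unstable η i) ∧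
  (∀ nn : ℕ, n = (nn : ℕ∞) → Unstable η (-(nn : ℤ) - 1)) ∧
  (∀ mm : ℕ, m = (mm : ℕ∞) → Unstable η ((mm : ℤ) + 1))

/-- `p_k^S(n,m)` for `n, m ∈ ℕ ∪ {∞}`: sup over configurations `η` satisfying the stable-window
condition of `P(σ_{R^k(η)}(0) = 0)`. -/
noncomputable def pS (μ : Measure (ℕ → ℤ → Bool)) (k : ℕ) (n m : ℕ∞) : ℝ≥0∞ :=
  ⨆ (η : Config) (_ : SWindow η n m), μ {ω | Unstable (evolve ω η k) 0}

/-!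
By linearity the expectation is the sum over sites `x` of the probability that `x` is unstable at
time `k`, and only sites within distance `2k` of an initially unstable site contribute. An initially
unstable site contributes at most `p_k^{III}` if both its neighbours are unstable and at most
`p_k^I` otherwise; since every run of unstable sites has length at least three, at most two thirds
of the unstable sites are ends of runs.

An initially stable site `x` lies in a window `[x - n, x + m]` of stable sites each of whose ends is
either bordered by an unstable site or at distance at least `2k` from `x`. Beyond a far end the
configuration is invisible to `x` up to time `k`, so it can be replaced to put an unstable site
right at the border; this bounds the probability by `p_k^S(n, m)`. Indexing the sites of a gap
between two runs by their position, every gap contributes at most `max_g ∑_i p_k^S(i - 1, g - i)`,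
and so do the two half-lines outside all runs together. There are at most a third as many runs as
unstable sites.
-/

section Dynamics

open Set

variable {ξ ξ' η η' : Config} {c : ℤ → Bool} {ω : ℕ → ℤ → Bool} {x y s : ℤ} {k : ℕ}

lemma unstable_congr (h : EqOn ξ ξ' (Icc (x - 2) (x + 2))) : Unstable ξ x ↔ Unstable ξ' x := by
  have e : ∀ y, x - 2 ≤ y → y ≤ x + 2 → ξ y = ξ' y := fun y h₁ h₂ => h ⟨h₁, h₂⟩
  simp only [Unstable, e (x - 2) le_rfl (by omega), e (x - 1) (by omega) (by omega),
    e x (by omega) (by omega), e (x + 1) (by omega) (by omega), e (x + 2) (by omega) le_rfl]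

lemma unstable_iff_exists_triple :
    Unstable ξ x ↔ ∃ s ∈ Icc (x - 2) x, ξ s = ξ (s + 1) ∧ ξ (s + 1) = ξ (s + 2) := by
  constructor
  · rintro (h | h | h)
    · exact ⟨x - 2, by simp, by simpa [show x - 2 + 1 = x - 1 by ring] using h⟩
    · exact ⟨x - 1, by simp, by simpa [show x - 1 + 2 = x + 1 by ring] using h⟩
    · exact ⟨x, by simp, h⟩
  · rintro ⟨s, hs, h⟩
    obtain rfl | rfl | rfl : s = x - 2 ∨ s = x - 1 ∨ s = x := by simp only [mem_Icc] at hs; omega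
    · left; simpa [show x - 2 + 1 = x - 1 by ring] using h
    · right; left; simpa [show x - 1 + 2 = x + 1 by ring] using h
    · right; right; exact h

lemma unstable_of_triple (h₁ : ξ s = ξ (s + 1)) (h₂ : ξ (s + 1) = ξ (s + 2))
    (hy : y ∈ Icc s (s + 2)) : Unstable ξ y :=
  unstable_iff_exists_triple.2 ⟨s, by simp only [mem_Icc] at hy ⊢; omega, h₁, h₂⟩

lemma unstable_add_one_and_add_two (hx : Unstable ξ x) (hx' : ¬ Unstable ξ (x - 1)) :
    Unstable ξ (x + 1) ∧ Unstable ξ (x + 2) := by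
  obtain ⟨s, hs, h₁, h₂⟩ := unstable_iff_exists_triple.1 hx
  simp only [mem_Icc] at hs
  obtain rfl : s = x := by
    by_contra hsx
    exact hx' (unstable_of_triple h₁ h₂ (by simp only [mem_Icc]; omega))
  exact ⟨unstable_of_triple h₁ h₂ (by simp), unstable_of_triple h₁ h₂ (by simp)⟩

lemma unstable_sub_one_and_sub_two (hx : Unstable ξ x) (hx' : ¬ Unstable ξ (x + 1)) :
    Unstable ξ (x - 1) ∧ Unstable ξ (x - 2) := by
  obtain ⟨s, hs, h₁, h₂⟩ := unstable_iff_exists_triple.1 hx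
  simp only [mem_Icc] at hs
  obtain rfl : s = x - 2 := by
    by_contra hsx
    exact hx' (unstable_of_triple h₁ h₂ (by simp only [mem_Icc]; omega))
  exact ⟨unstable_of_triple h₁ h₂ (by simp only [mem_Icc]; omega),
    unstable_of_triple h₁ h₂ (by simp)⟩

lemma update_of_not_unstable (h : ¬ Unstable ξ x) : update ξ c x = ξ x := if_neg h

lemma update_eq_of_eqOn (h : EqOn ξ ξ' (Icc (x - 2) (x + 2))) :
    update ξ c x = update ξ' c x := by
  simp only [update, unstable_congr h]
  rw [h (show x ∈ Icc (x - 2) (x + 2) from ⟨by omega, by omega⟩)]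

lemma evolve_eqOn_of_eqOn {a b : ℤ} (s : ℕ) (h : EqOn (evolve ω η s) (evolve ω η' s) (Icc a b)) :
    ∀ t : ℕ, EqOn (evolve ω η (s + t)) (evolve ω η' (s + t)) (Icc (a + 2 * t) (b - 2 * t))
  | 0 => by simpa using h
  | t + 1 => fun y hy => by
    simp only [mem_Icc] at hy
    exact update_eq_of_eqOn fun z hz => by
      simp only [mem_Icc] at hz
      exact evolve_eqOn_of_eqOn s h t ⟨by push_cast at hy; omega, by push_cast at hy; omega⟩

/-- Since the light cone has speed 2, agreement after the first step on `[x - 2k, x + 2k]`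
suffices; callers get it at the edges from sites stable in both configurations, which keep their
colour. -/
lemma unstable_evolve_iff_of_eqOn_update (hk : 1 ≤ k)
    (h : EqOn (update η (ω 0)) (update η' (ω 0)) (Icc (x - 2 * k) (x + 2 * k))) :
    Unstable (evolve ω η k) x ↔ Unstable (evolve ω η' k) x := by
  obtain ⟨t, rfl⟩ : ∃ t, k = 1 + t := ⟨k - 1, by omega⟩
  exact unstable_congr fun y hy => evolve_eqOn_of_eqOn 1 h t
    ⟨by simp only [mem_Icc] at hy; push_cast; omega, by simp only [mem_Icc] at hy; push_cast; omega⟩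

lemma evolve_apply_eq_and_not_unstable (ω : ℕ → ℤ → Bool) :
    ∀ (t : ℕ) (x : ℤ), (∀ y ∈ Icc (x - 2 * t) (x + 2 * t), ¬ Unstable η y) →
      evolve ω η t x = η x ∧ ¬ Unstable (evolve ω η t) x
  | 0, x, h => ⟨rfl, h x (by simp)⟩
  | t + 1, x, h => by
    have ih : ∀ y ∈ Icc (x - 2) (x + 2), evolve ω η t y = η y ∧ ¬ Unstable (evolve ω η t) y :=
      fun y hy => evolve_apply_eq_and_not_unstable ω t y fun z hz => h z (by
        simp only [mem_Icc] at hy hz ⊢; push_cast; omega)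
    have hagree : EqOn (evolve ω η (t + 1)) η (Icc (x - 2) (x + 2)) := fun y hy =>
      (update_of_not_unstable (ih y hy).2).trans (ih y hy).1
    exact ⟨hagree (by simp), (unstable_congr hagree).not.2
      (h x (by simp only [mem_Icc]; push_cast; omega))⟩

lemma exists_unstable_near_of_unstable_evolve (h : Unstable (evolve ω η k) x) :
    ∃ y ∈ Icc (x - 2 * k) (x + 2 * k), Unstable η y := by
  by_contra! h'
  exact (evolve_apply_eq_and_not_unstable ω k x h').2 h

end Dynamics

def unstableEvent (η : Config) (k : ℕ) (x : ℤ) : Set (ℕ → ℤ → Bool) :=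
  {ω | Unstable (evolve ω η k) x}

section Modification

open Set

variable {η : Config} {L R y : ℤ}

def cut (η : Config) (L R : ℤ) : Config :=
  fun y => if y < L then !η L else if R < y then !η R else η y

lemma cut_eqOn : EqOn (cut η L R) η (Icc L R) := fun y hy => by
  simp only [cut, if_neg (not_lt.2 hy.1), if_neg (not_lt.2 hy.2)]

lemma unstable_cut_sub_one : Unstable (cut η L R) (L - 1) := by
  have e : ∀ z < L, cut η L R z = !η L := fun z hz => if_pos hz
  exact unstable_of_triple (s := L - 3) ((e _ (by omega)).trans (e _ (by omega)).symm)
    ((e _ (by omega)).trans (e _ (by omega)).symm) ⟨by omega, by omega⟩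

lemma unstable_cut_add_one (h : L ≤ R) : Unstable (cut η L R) (R + 1) := by
  have e : ∀ z > R, cut η L R z = !η R := fun z hz => by
    simp only [cut, if_neg (show ¬ z < L by omega), if_pos hz]
  exact unstable_of_triple (s := R + 1) ((e _ (by omega)).trans (e _ (by omega)).symm)
    ((e _ (by omega)).trans (e _ (by omega)).symm) ⟨by omega, by omega⟩

lemma not_unstable_cut (hy : y ∈ Icc L R) (h : ¬ Unstable η y) : ¬ Unstable (cut η L R) y := by
  intro hu
  obtain ⟨s, hs, h₁, h₂⟩ := unstable_iff_exists_triple.1 hu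
  simp only [mem_Icc] at hs hy
  have hL : cut η L R (L - 1) ≠ cut η L R L := by
    simp [cut, not_lt.2 (hy.1.trans hy.2)]
  have hR : cut η L R R ≠ cut η L R (R + 1) := by
    simp [cut, not_lt.2 (hy.1.trans hy.2), show ¬ R + 1 < L by omega]
  have hsL : L ≤ s := by
    by_contra
    obtain rfl | rfl : s = L - 2 ∨ s = L - 1 := by omega
    · exact hL (by simpa [show L - 2 + 1 = L - 1 by ring, show L - 2 + 2 = L by ring] using h₂)
    · exact hL (by simpa using h₁)
  have hsR : s + 2 ≤ R := by
    by_contra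
    obtain rfl | rfl : s = R - 1 ∨ s = R := by omega
    · exact hR (by simpa [show R - 1 + 2 = R + 1 by ring] using h₂)
    · exact hR h₁
  rw [cut_eqOn ⟨hsL, by omega⟩, cut_eqOn ⟨by omega, by omega⟩] at h₁
  rw [cut_eqOn ⟨by omega, by omega⟩, cut_eqOn ⟨by omega, hsR⟩] at h₂
  exact h (unstable_of_triple h₁ h₂ ⟨by omega, by omega⟩)

lemma unstableEvent_cut_eq {k : ℕ} {x : ℤ} (hk : 1 ≤ k)
    (h : ∀ y ∈ Icc (x - 2 * k) (x + 2 * k),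
      (L ≤ y - 2 ∧ y + 2 ≤ R) ∨ (y ∈ Icc L R ∧ ¬ Unstable η y)) :
    unstableEvent η k x = unstableEvent (cut η L R) k x := by
  ext ω
  refine unstable_evolve_iff_of_eqOn_update hk fun y hy => ?_
  rcases h y hy with ⟨hL, hR⟩ | ⟨hyLR, hy⟩
  · exact update_eq_of_eqOn fun z hz => (cut_eqOn ⟨by linarith [hz.1], by linarith [hz.2]⟩).symm
  · rw [update_of_not_unstable hy, update_of_not_unstable (not_unstable_cut hyLR hy)]
    exact (cut_eqOn hyLR).symm

end Modification

section Translation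

variable {ξ η : Config} {ω : ℕ → ℤ → Bool}

lemma unstable_comp_add (a x : ℤ) : Unstable (fun z => ξ (z + a)) x ↔ Unstable ξ (x + a) := by
  simp only [Unstable, sub_add_eq_add_sub, add_right_comm _ a]

lemma evolve_comp_add (a : ℤ) :
    ∀ t, evolve (fun j z => ω j (z + a)) (fun z => η (z + a)) t = fun z => evolve ω η t (z + a)
  | 0 => rfl
  | t + 1 => by
    funext z
    simp only [evolve, update, evolve_comp_add a t, unstable_comp_add]

end Translation

section Measurability

lemma measurableSet_unstable {Ω : Type*} [MeasurableSpace Ω] {F : Ω → Config}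
    (hF : ∀ y, Measurable fun ω => F ω y) (x : ℤ) : MeasurableSet {ω | Unstable (F ω) x} := by
  have h : ∀ a b, MeasurableSet {ω | F ω a = F ω b} := fun a b => measurableSet_eq_fun (hF a) (hF b)
  simp only [Unstable, Set.ofPred_or, Set.ofPred_and]
  exact ((h _ _).inter (h _ _)).union (((h _ _).inter (h _ _)).union ((h _ _).inter (h _ _)))

lemma measurable_evolve_apply (η : Config) :
    ∀ t y, Measurable fun ω : ℕ → ℤ → Bool => evolve ω η t y
  | 0, _ => measurable_const
  | t + 1, y => Measurable.ite (measurableSet_unstable (measurable_evolve_apply η t) y)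
      ((measurable_pi_apply y).comp (measurable_pi_apply t)) (measurable_evolve_apply η t y)

lemma measurableSet_unstableEvent (η : Config) (k : ℕ) (x : ℤ) :
    MeasurableSet (unstableEvent η k x) :=
  measurableSet_unstable (measurable_evolve_apply η k) x

end Measurability

section Coins

variable {μ ν : Measure (ℕ → ℤ → Bool)}

def coinCylinders : Set (Set (ℕ → ℤ → Bool)) :=
  {A | ∃ (S : Finset (ℕ × ℤ)) (f : ℕ × ℤ → Bool), A = {ω | ∀ p ∈ S, ω p.1 p.2 = f p}}

lemma isPiSystem_coinCylinders : IsPiSystem coinCylinders := by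
  rintro _ ⟨S, f, rfl⟩ _ ⟨T, g, rfl⟩ ⟨ω₀, h₁, h₂⟩
  refine ⟨S ∪ T, fun p => ω₀ p.1 p.2, ?_⟩
  ext ω
  simp only [Set.mem_inter_iff, Set.mem_ofPred_eq, Finset.mem_union, or_imp, forall_and] at h₁ h₂ ⊢
  exact and_congr (forall₂_congr fun p hp => by rw [h₁ p hp])
    (forall₂_congr fun p hp => by rw [h₂ p hp])

lemma measurableSet_cylinder (S : Finset (ℕ × ℤ)) (f : ℕ × ℤ → Bool) :
    MeasurableSet {ω : ℕ → ℤ → Bool | ∀ p ∈ S, ω p.1 p.2 = f p} := by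
  simp only [Set.ofPred_forall]
  exact Finset.measurableSet_biInter S fun p _ =>
    measurableSet_eq_fun ((measurable_pi_apply p.2).comp (measurable_pi_apply p.1)) measurable_const

lemma generateFrom_coinCylinders :
    MeasurableSpace.generateFrom coinCylinders =
      (inferInstance : MeasurableSpace (ℕ → ℤ → Bool)) := by
  refine le_antisymm (MeasurableSpace.generateFrom_le ?_) ?_
  · rintro _ ⟨S, f, rfl⟩
    exact measurableSet_cylinder S f
  · have h : Measurable[MeasurableSpace.generateFrom coinCylinders] (id : (ℕ → ℤ → Bool) → _) := by
      refine (@measurable_pi_iff _ _ _ (MeasurableSpace.generateFrom coinCylinders) _ _).2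
        fun j => (@measurable_pi_iff _ _ _ (MeasurableSpace.generateFrom coinCylinders) _ _).2
        fun z => measurable_to_bool ?_
      exact MeasurableSpace.measurableSet_generateFrom ⟨{(j, z)}, fun _ => true, by ext; simp⟩
    exact fun s hs => h hs

lemma IIDCoins.measure_univ (hμ : IIDCoins μ) : μ Set.univ = 1 := by
  simpa using hμ ∅ fun _ => true

lemma IIDCoins.unique (hμ : IIDCoins μ) (hν : IIDCoins ν) : μ = ν :=
  have : IsFiniteMeasure μ := ⟨by simp [hμ.measure_univ]⟩
  ext_of_generate_finite coinCylinders generateFrom_coinCylinders.symm isPiSystem_coinCylinders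
    (by rintro _ ⟨S, f, rfl⟩; rw [hμ, hν]) (by rw [hμ.measure_univ, hν.measure_univ])

lemma measurable_relabel (e : ℤ ≃ ℤ) :
    Measurable fun (ω : ℕ → ℤ → Bool) j z => ω j (e z) :=
  measurable_pi_lambda _ fun j => measurable_pi_lambda _ fun z =>
    (measurable_pi_apply (e z)).comp (measurable_pi_apply j)

lemma IIDCoins.map_relabel (hμ : IIDCoins μ) (e : ℤ ≃ ℤ) :
    IIDCoins (μ.map fun ω j z => ω j (e z)) := by
  intro S f
  let e' : ℕ × ℤ ≃ ℕ × ℤ := (Equiv.refl ℕ).prodCongr e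
  have hpre : (fun (ω : ℕ → ℤ → Bool) j z => ω j (e z)) ⁻¹' {ω | ∀ p ∈ S, ω p.1 p.2 = f p} =
      {ω | ∀ q ∈ S.map e'.toEmbedding, ω q.1 q.2 = f (e'.symm q)} := by
    ext ω
    simp only [Set.mem_preimage, Set.mem_ofPred_eq, Finset.mem_map_equiv]
    constructor
    · intro h q hq
      simpa [e'] using h _ hq
    · intro h p hp
      have := h (e' p) (by simpa using hp)
      rwa [e'.symm_apply_apply] at this
  rw [Measure.map_apply (measurable_relabel e) (measurableSet_cylinder S f), hpre, hμ,
    Finset.card_map]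

lemma measure_unstableEvent_comp_add (hμ : IIDCoins μ) (η : Config) (k : ℕ) (a x : ℤ) :
    μ (unstableEvent (fun z => η (z + a)) k x) = μ (unstableEvent η k (x + a)) := by
  have hpre : unstableEvent (fun z => η (z + a)) k x =
      (fun ω j z => ω j (Equiv.subRight a z)) ⁻¹' unstableEvent η k (x + a) := by
    ext ω
    have h := evolve_comp_add (ω := fun j z => ω j (z - a)) (η := η) a k
    simp only [add_sub_cancel_right] at h
    simp [unstableEvent, h, unstable_comp_add]
  rw [hpre, ← Measure.map_apply (measurable_relabel _) (measurableSet_unstableEvent η k _),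
    (hμ.map_relabel _).unique hμ]

end Coins

section SiteBounds

open Set

variable {μ : Measure (ℕ → ℤ → Bool)} {η : Config} {k : ℕ} {x : ℤ}

lemma measure_unstableEvent_le_pI (hμ : IIDCoins μ) (hx : Unstable η x) :
    μ (unstableEvent η k x) ≤ pI μ k := by
  rw [← zero_add x, ← measure_unstableEvent_comp_add hμ]
  exact le_iSup₂ (f := fun (ξ : Config) (_ : Unstable ξ 0) => μ (unstableEvent ξ k 0)) _
    (by rwa [unstable_comp_add, zero_add])

lemma measure_unstableEvent_le_pIII (hμ : IIDCoins μ) (hxl : Unstable η (x - 1))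
    (hx : Unstable η x) (hxr : Unstable η (x + 1)) : μ (unstableEvent η k x) ≤ pIII μ k := by
  rw [← zero_add x, ← measure_unstableEvent_comp_add hμ]
  refine le_iSup₂ (f := fun (ξ : Config) (_ : Unstable ξ (-1) ∧ Unstable ξ 0 ∧ Unstable ξ 1) =>
    μ (unstableEvent ξ k 0)) _ ⟨?_, ?_, ?_⟩ <;> rw [unstable_comp_add]
  · rwa [neg_add_eq_sub]
  · rwa [zero_add]
  · rwa [add_comm]

lemma pIII_le_pI (μ : Measure (ℕ → ℤ → Bool)) (k : ℕ) : pIII μ k ≤ pI μ k :=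
  iSup₂_le fun ξ h => le_iSup₂ (f := fun (ξ : Config) (_ : Unstable ξ 0) =>
    μ (unstableEvent ξ k 0)) ξ h.2.1

lemma sWindow_natCast {n m : ℕ} (hwin : ∀ i ∈ Icc (-(n : ℤ)) m, ¬ Unstable η i)
    (hl : Unstable η (-n - 1)) (hr : Unstable η (m + 1)) : SWindow η n m := by
  refine ⟨fun i h₁ h₂ => hwin i ⟨?_, ?_⟩, fun n' h => ?_, fun m' h => ?_⟩
  · have := Nat.cast_le.1 h₁; omega
  · have := Nat.cast_le.1 h₂; omega
  · rwa [← Nat.cast_inj.1 h]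
  · rwa [← Nat.cast_inj.1 h]

lemma measure_unstableEvent_le_pS (hμ : IIDCoins μ) (hk : 1 ≤ k) (n m : ℕ)
    (hwin : ∀ y ∈ Icc (x - n) (x + m), ¬ Unstable η y)
    (hl : Unstable η (x - n - 1) ∨ 2 * k ≤ n) (hr : Unstable η (x + m + 1) ∨ 2 * k ≤ m) :
    μ (unstableEvent η k x) ≤ pS μ k n m := by
  -- `η` is cut at a far end of the window, and at a bordered end far enough out that neither
  -- `x` nor the bordering unstable site can see the cut.
  obtain ⟨L, hLn, hL⟩ : ∃ L ≤ x - n, (L = x - n ∧ 2 * k ≤ n) ∨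
      (L ≤ x - n - 3 ∧ L ≤ x - 2 * k - 2 ∧ Unstable η (x - n - 1)) := by
    rcases hl with h | h
    · exact ⟨x - n - 2 * k - 3, by omega, Or.inr ⟨by omega, by omega, h⟩⟩
    · exact ⟨x - n, le_rfl, Or.inl ⟨rfl, h⟩⟩
  obtain ⟨R, hRm, hR⟩ : ∃ R ≥ x + m, (R = x + m ∧ 2 * k ≤ m) ∨
      (x + m + 3 ≤ R ∧ x + 2 * k + 2 ≤ R ∧ Unstable η (x + m + 1)) := by
    rcases hr with h | h
    · exact ⟨x + m + 2 * k + 3, by omega, Or.inr ⟨by omega, by omega, h⟩⟩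
    · exact ⟨x + m, le_rfl, Or.inl ⟨rfl, h⟩⟩
  have hLR : x - n + 1 ≤ R ∧ L ≤ x + m - 1 := by
    have := hL.imp_right fun h => h.1
    have := hR.imp_right fun h => h.1
    omega
  set η' := cut η L R
  have hwin' : ∀ y ∈ Icc (x - n) (x + m), ¬ Unstable η' y := fun y hy =>
    not_unstable_cut ⟨by linarith [hy.1], by linarith [hy.2]⟩ (hwin y hy)
  have hl' : Unstable η' (x - n - 1) := by
    rcases hL with ⟨rfl, -⟩ | ⟨h₁, -, h₃⟩
    · exact unstable_cut_sub_one
    · exact (unstable_congr fun y hy =>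
        (cut_eqOn ⟨by linarith [hy.1], by linarith [hy.2]⟩).symm).1 h₃
  have hr' : Unstable η' (x + m + 1) := by
    rcases hR with ⟨rfl, -⟩ | ⟨h₁, -, h₃⟩
    · exact unstable_cut_add_one (by omega)
    · exact (unstable_congr fun y hy =>
        (cut_eqOn ⟨by linarith [hy.1], by linarith [hy.2]⟩).symm).1 h₃
  have hEv : unstableEvent η k x = unstableEvent η' k x := by
    refine unstableEvent_cut_eq hk fun y hy => ?_
    simp only [mem_Icc] at hy
    have hL' : (L = x - n ∧ 2 * k ≤ n) ∨ L ≤ x - 2 * k - 2 := hL.imp_right fun h => h.2.1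
    have hR' : (R = x + m ∧ 2 * k ≤ m) ∨ x + 2 * k + 2 ≤ R := hR.imp_right fun h => h.2.1
    by_cases hy' : L ≤ y - 2 ∧ y + 2 ≤ R
    · exact Or.inl hy'
    · have hyw : y ∈ Icc (x - n) (x + m) := ⟨by omega, by omega⟩
      exact Or.inr ⟨⟨by linarith [hyw.1], by linarith [hyw.2]⟩, hwin y hyw⟩
  calc μ (unstableEvent η k x) = μ (unstableEvent (fun z => η' (z + x)) k 0) := by
        rw [hEv, measure_unstableEvent_comp_add hμ, zero_add]
    _ ≤ pS μ k n m := le_iSup₂ (f := fun (ξ : Config) (_ : SWindow ξ n m) =>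
        μ (unstableEvent ξ k 0)) _ <| sWindow_natCast
        (fun i hi => by
          rw [unstable_comp_add]; exact hwin' _ ⟨by linarith [hi.1], by linarith [hi.2]⟩)
        (by rwa [unstable_comp_add, show -(n : ℤ) - 1 + x = x - n - 1 by ring])
        (by rwa [unstable_comp_add, show (m : ℤ) + 1 + x = x + m + 1 by ring])

end SiteBounds

noncomputable def maxWindowSum (μ : Measure (ℕ → ℤ → Bool)) (k : ℕ) : ℝ≥0∞ :=
  (Finset.Icc 1 (4 * k)).sup
    fun g => ∑ i ∈ Finset.Icc 1 g, pS μ k ((i - 1 : ℕ) : ℕ∞) ((g - i : ℕ) : ℕ∞)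

section WindowSums

open Finset

variable {μ : Measure (ℕ → ℤ → Bool)} {η : Config} {k : ℕ}

lemma sum_measure_unstableEvent_le_sum_pS (hμ : IIDCoins μ) (hk : 1 ≤ k) (x₀ : ℤ) (G a b : ℕ)
    (ha : 1 ≤ a) (hb : b ≤ G) (hwin : ∀ y ∈ Set.Icc (x₀ + 1) (x₀ + G), ¬ Unstable η y)
    (hl : Unstable η x₀ ∨ 2 * k + 1 ≤ a) (hr : Unstable η (x₀ + G + 1) ∨ b + 2 * k ≤ G) :
    ∑ x ∈ Icc (x₀ + a) (x₀ + b), μ (unstableEvent η k x) ≤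
      ∑ i ∈ Icc a b, pS μ k ((i - 1 : ℕ) : ℕ∞) ((G - i : ℕ) : ℕ∞) := by
  rw [sum_nbij' (s := Icc (x₀ + a) (x₀ + b)) (t := Icc a b) (fun x => (x - x₀).toNat)
    (fun i => x₀ + i) (g := fun i => μ (unstableEvent η k (x₀ + i)))
    (fun x hx => by simp only [mem_Icc] at hx ⊢; omega)
    (fun i hi => by simp only [mem_Icc] at hi ⊢; omega)
    (fun x hx => by simp only [mem_Icc] at hx ⊢; omega) (fun i _ => by simp)
    (fun x hx => by simp only [mem_Icc] at hx; congr; omega)]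
  refine sum_le_sum fun i hi => ?_
  simp only [mem_Icc] at hi
  refine measure_unstableEvent_le_pS hμ hk (i - 1) (G - i)
    (fun y hy => hwin y ⟨by have := hy.1; omega, by have := hy.2; omega⟩) ?_ ?_
  · refine hl.imp (fun h => ?_) (fun h => by omega)
    rwa [show x₀ + i - ((i - 1 : ℕ) : ℤ) - 1 = x₀ by omega]
  · refine hr.imp (fun h => ?_) (fun h => by omega)
    rwa [show x₀ + i + ((G - i : ℕ) : ℤ) + 1 = x₀ + G + 1 by omega]

lemma sum_near_unstable_le_maxWindowSum (hμ : IIDCoins μ) (hk : 1 ≤ k) {r ℓ : ℤ}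
    (hr : Unstable η r) (hrs : ∀ y ∈ Set.Ioc r (r + 4 * k), ¬ Unstable η y)
    (hℓ : Unstable η ℓ) (hℓs : ∀ y ∈ Set.Ico (ℓ - 4 * k) ℓ, ¬ Unstable η y) :
    ∑ x ∈ Icc (r + 1) (r + 2 * k), μ (unstableEvent η k x) +
      ∑ x ∈ Icc (ℓ - 2 * k) (ℓ - 1), μ (unstableEvent η k x) ≤ maxWindowSum μ k := by
  set P := fun i : ℕ => pS μ k ((i - 1 : ℕ) : ℕ∞) ((4 * k - i : ℕ) : ℕ∞)
  have h₁ := sum_measure_unstableEvent_le_sum_pS hμ hk r (4 * k) 1 (2 * k) le_rfl (by omega)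
    (fun y hy => hrs y ⟨by have := hy.1; omega, by have := hy.2; push_cast at this; omega⟩)
    (Or.inl hr) (Or.inr (by omega))
  have h₂ := sum_measure_unstableEvent_le_sum_pS hμ hk (ℓ - 4 * k - 1) (4 * k) (2 * k + 1) (4 * k)
    (by omega) le_rfl
    (fun y hy => hℓs y ⟨by have := hy.1; omega, by have := hy.2; push_cast at this; omega⟩)
    (Or.inr le_rfl)
    (Or.inl (by rwa [show ℓ - 4 * k - 1 + ((4 * k : ℕ) : ℤ) + 1 = ℓ by push_cast; ring]))
  rw [show ℓ - 4 * k - 1 + ((2 * k + 1 : ℕ) : ℤ) = ℓ - 2 * k by push_cast; ring,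
    show ℓ - 4 * k - 1 + ((4 * k : ℕ) : ℤ) = ℓ - 1 by push_cast; ring] at h₂
  push_cast at h₁
  calc _ ≤ ∑ i ∈ Icc 1 (2 * k), P i + ∑ i ∈ Icc (2 * k + 1) (4 * k), P i := add_le_add h₁ h₂
    _ = ∑ i ∈ Icc 1 (4 * k), P i := by
      rw [← sum_union (disjoint_left.2 fun i h₁ h₂ => by simp only [mem_Icc] at h₁ h₂; omega)]
      congr 1
      ext i
      simp only [mem_union, mem_Icc]
      omega
    _ ≤ maxWindowSum μ k := le_sup (f := fun g => ∑ i ∈ Icc 1 g,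
        pS μ k ((i - 1 : ℕ) : ℕ∞) ((g - i : ℕ) : ℕ∞)) (by simp only [mem_Icc]; omega)

lemma sum_gap_le_maxWindowSum (hμ : IIDCoins μ) (hk : 1 ≤ k) {r ℓ : ℤ}
    (hr : Unstable η r) (hℓ : Unstable η ℓ) (hrℓ : r + 1 < ℓ)
    (hgap : ∀ y ∈ Set.Ioo r ℓ, ¬ Unstable η y) :
    ∑ x ∈ Ioo r ℓ, μ (unstableEvent η k x) ≤ maxWindowSum μ k := by
  obtain ⟨g, rfl⟩ : ∃ g : ℕ, ℓ = r + g + 1 := ⟨(ℓ - r - 1).toNat, by omega⟩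
  by_cases hg : g ≤ 4 * k
  · calc ∑ x ∈ Ioo r (r + g + 1), μ (unstableEvent η k x)
        = ∑ x ∈ Icc (r + (1 : ℕ)) (r + g), μ (unstableEvent η k x) := by
          congr 1; ext x; simp only [mem_Ioo, mem_Icc]; omega
      _ ≤ ∑ i ∈ Icc 1 g, pS μ k ((i - 1 : ℕ) : ℕ∞) ((g - i : ℕ) : ℕ∞) :=
          sum_measure_unstableEvent_le_sum_pS hμ hk r g 1 g (by omega) le_rfl
            (fun y hy => hgap y ⟨by have := hy.1; omega, by have := hy.2; omega⟩)
            (Or.inl hr) (Or.inl hℓ)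
      _ ≤ maxWindowSum μ k := le_sup (f := fun g => ∑ i ∈ Icc 1 g,
          pS μ k ((i - 1 : ℕ) : ℕ∞) ((g - i : ℕ) : ℕ∞)) (by simp only [mem_Icc]; omega)
  · calc ∑ x ∈ Ioo r (r + g + 1), μ (unstableEvent η k x)
        ≤ ∑ x ∈ Icc (r + 1) (r + 2 * k) ∪ Icc (r + g + 1 - 2 * k) (r + g + 1 - 1),
            μ (unstableEvent η k x) := by
          refine sum_le_sum_of_ne_zero fun x hx hne => ?_
          obtain ⟨ω, hω⟩ := nonempty_of_measure_ne_zero hne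
          obtain ⟨y, hy, hyu⟩ := exists_unstable_near_of_unstable_evolve hω
          have : y ∉ Set.Ioo r (r + g + 1) := fun h => hgap y h hyu
          simp only [mem_Ioo, Set.mem_Ioo, Set.mem_Icc] at hx hy this
          simp only [mem_union, mem_Icc]
          omega
      _ = _ := sum_union (disjoint_left.2 fun i h₁ h₂ => by simp only [mem_Icc] at h₁ h₂; omega)
      _ ≤ maxWindowSum μ k := sum_near_unstable_le_maxWindowSum hμ hk hr
          (fun y hy => hgap y ⟨hy.1, by have := hy.2; omega⟩) hℓ
          (fun y hy => hgap y ⟨by have := hy.1; omega, hy.2⟩)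

end WindowSums

namespace Finset

variable {ι α M : Type*} [AddCommMonoid M] [PartialOrder M] [CanonicallyOrderedAdd M]
  [DecidableEq α]

lemma sum_union_le (s t : Finset α) (f : α → M) :
    ∑ x ∈ s ∪ t, f x ≤ ∑ x ∈ s, f x + ∑ x ∈ t, f x :=
  le_self_add.trans sum_union_inter.le

lemma sum_biUnion_le [IsOrderedAddMonoid M] (s : Finset ι) (t : ι → Finset α) (f : α → M) :
    ∑ x ∈ s.biUnion t, f x ≤ ∑ i ∈ s, ∑ x ∈ t i, f x := by
  classical
  induction s using Finset.induction_on with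
  | empty => simp
  | insert i s hi ih =>
    rw [biUnion_insert, sum_insert hi]
    exact (sum_union_le _ _ _).trans (add_le_add le_rfl ih)

end Finset

section Runs

open Finset

/-- The progressions `x, x + d, x + 2 * d` started at the elements counted on the left are
disjoint. -/
lemma three_mul_card_filter_sub_notMem_le {U : Finset ℤ} {d : ℤ}
    (hU : ∀ x ∈ U, x - d ∉ U → x + d ∈ U ∧ x + 2 * d ∈ U) :
    3 * #(U.filter fun x => x - d ∉ U) ≤ #U := by
  set E := U.filter fun x => x - d ∉ U
  have hE : ∀ x ∈ E, x ∈ U ∧ x - d ∉ U ∧ x + d ∈ U ∧ x + 2 * d ∈ U := fun x hx => by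
    obtain ⟨hxU, hxd⟩ := mem_filter.1 hx
    exact ⟨hxU, hxd, hU x hxU hxd⟩
  have key : ∀ x ∈ E, ∀ y ∈ E, ∀ i j : ℕ, i < j → j < 3 → x + i * d ≠ y + j * d := by
    intro x hx y hy i j hij hj h
    obtain ⟨-, hxd, -, -⟩ := hE x hx
    obtain ⟨hyU, -, hyd, -⟩ := hE y hy
    have : x - d = y ∨ x - d = y + d := by
      obtain ⟨rfl, rfl⟩ | ⟨rfl, rfl⟩ | ⟨rfl, rfl⟩ :
          (i = 0 ∧ j = 1) ∨ (i = 0 ∧ j = 2) ∨ (i = 1 ∧ j = 2) := by omega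
      all_goals push_cast at h
      · left; linarith
      · right; linarith
      · left; linarith
    rcases this with h' | h' <;> rw [h'] at hxd <;> contradiction
  calc 3 * #E = #(E ×ˢ range 3) := by rw [card_product, card_range, mul_comm]
    _ ≤ #U := by
      refine card_le_card_of_injOn (fun p => p.1 + p.2 * d) ?_ ?_
      · rintro ⟨x, i⟩ hp
        simp only [coe_product, coe_range, Set.mem_prod, mem_coe, Set.mem_Iio] at hp
        obtain ⟨hxU, -, hx₁, hx₂⟩ := hE x hp.1
        obtain rfl | rfl | rfl : i = 0 ∨ i = 1 ∨ i = 2 := by omega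
        · simpa using hxU
        · simpa using hx₁
        · simpa using hx₂
      · rintro ⟨x, i⟩ hp ⟨y, j⟩ hq h
        simp only [coe_product, coe_range, Set.mem_prod, mem_coe, Set.mem_Iio] at hp hq h
        rcases lt_trichotomy i j with hij | rfl | hij
        · exact absurd h (key x hp.1 y hq.1 i j hij hq.2)
        · exact Prod.ext (by simpa using h) rfl
        · exact absurd h.symm (key y hq.1 x hp.1 j i hij hp.2)

variable {η : Config} {U : Finset ℤ}

lemma three_mul_card_leftEnds_le (hU : ∀ x, x ∈ U ↔ Unstable η x) :
    3 * #(U.filter fun x => x - 1 ∉ U) ≤ #U :=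
  three_mul_card_filter_sub_notMem_le fun x hx hx' => by
    simp only [hU] at hx hx' ⊢
    simpa using unstable_add_one_and_add_two hx hx'

lemma three_mul_card_ends_le (hU : ∀ x, x ∈ U ↔ Unstable η x) :
    3 * #(U.filter fun x => x - 1 ∉ U ∨ x + 1 ∉ U) ≤ 2 * #U := by
  have hr := three_mul_card_filter_sub_notMem_le (U := U) (d := -1) fun x hx hx' => by
    simp only [hU, sub_neg_eq_add] at hx hx' ⊢
    simpa [← sub_eq_add_neg] using unstable_sub_one_and_sub_two hx hx'
  simp only [sub_neg_eq_add] at hr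
  rw [filter_or]
  have := card_union_le (U.filter fun x => x - 1 ∉ U) (U.filter fun x => x + 1 ∉ U)
  have := three_mul_card_leftEnds_le hU
  omega

def gaps (U : Finset ℤ) : Finset (ℤ × ℤ) :=
  (U ×ˢ U).filter fun p => p.1 + 1 < p.2 ∧ ∀ u ∈ U, u ≤ p.1 ∨ p.2 ≤ u

lemma card_gaps_lt (hne : U.Nonempty) : #(gaps U) < #(U.filter fun x => x - 1 ∉ U) := by
  have hmem : ∀ p ∈ gaps U, p.1 ∈ U ∧ p.2 ∈ U ∧ p.1 + 1 < p.2 ∧ ∀ u ∈ U, u ≤ p.1 ∨ p.2 ≤ u :=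
    fun p hp => by simpa [gaps, and_assoc] using hp
  calc #(gaps U) = #((gaps U).image Prod.snd) := by
        refine (card_image_of_injOn fun p hp q hq h => ?_).symm
        obtain ⟨hp₁, -, hp, hpU⟩ := hmem p hp
        obtain ⟨hq₁, -, hq, hqU⟩ := hmem q hq
        have := hpU q.1 hq₁
        have := hqU p.1 hp₁
        exact Prod.ext (by omega) h
    _ ≤ #((U.filter fun x => x - 1 ∉ U).erase (U.min' hne)) := by
        refine card_le_card fun ℓ hℓ => ?_
        obtain ⟨p, hp, rfl⟩ := mem_image.1 hℓ
        obtain ⟨hp₁, hp₂, hp, hpU⟩ := hmem p hp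
        refine mem_erase.2 ⟨fun h => ?_, mem_filter.2 ⟨hp₂, fun h => ?_⟩⟩
        · have := min'_le U _ hp₁; omega
        · have := hpU _ h; omega
    _ < _ := card_erase_lt_of_mem <| mem_filter.2 ⟨min'_mem U hne, fun h => by
        have := min'_le U _ h; omega⟩

lemma exists_mem_gaps {x a b : ℤ} (ha : a ∈ U) (hb : b ∈ U) (hax : a < x) (hxb : x < b)
    (hx : x ∉ U) : ∃ p ∈ gaps U, x ∈ Ioo p.1 p.2 := by
  have hl : (U.filter (· < x)).Nonempty := ⟨a, mem_filter.2 ⟨ha, hax⟩⟩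
  have hr : (U.filter (x < ·)).Nonempty := ⟨b, mem_filter.2 ⟨hb, hxb⟩⟩
  obtain ⟨hrU, hrx⟩ := mem_filter.1 ((U.filter (· < x)).max'_mem hl)
  obtain ⟨hℓU, hxℓ⟩ := mem_filter.1 ((U.filter (x < ·)).min'_mem hr)
  refine ⟨((U.filter (· < x)).max' hl, (U.filter (x < ·)).min' hr), ?_, mem_Ioo.2 ⟨hrx, hxℓ⟩⟩
  refine mem_filter.2 ⟨mem_product.2 ⟨hrU, hℓU⟩, by omega, fun u hu => ?_⟩
  rcases lt_trichotomy u x with h | rfl | h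
  · exact Or.inl (le_max' _ u (mem_filter.2 ⟨hu, h⟩))
  · exact absurd hu hx
  · exact Or.inr (min'_le _ u (mem_filter.2 ⟨hu, h⟩))

lemma sum_Icc_le_sum_add_sum_gaps {M : Type*} [AddCommMonoid M] [PartialOrder M]
    [IsOrderedAddMonoid M] [CanonicallyOrderedAdd M] (hne : U.Nonempty) (w : ℤ) (f : ℤ → M) :
    ∑ x ∈ Icc (U.min' hne - w) (U.max' hne + w), f x ≤ ∑ x ∈ U, f x +
      (∑ x ∈ Icc (U.max' hne + 1) (U.max' hne + w), f x +
        ∑ x ∈ Icc (U.min' hne - w) (U.min' hne - 1), f x) +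
      ∑ p ∈ gaps U, ∑ x ∈ Ioo p.1 p.2, f x := by
  refine (sum_le_sum_of_subset (t := U ∪ (Icc (U.max' hne + 1) (U.max' hne + w) ∪
    Icc (U.min' hne - w) (U.min' hne - 1)) ∪ (gaps U).biUnion fun p => Ioo p.1 p.2)
    fun x hx => ?_).trans ?_
  · simp only [mem_union, mem_Icc, mem_biUnion] at hx ⊢
    by_cases hxU : x ∈ U
    · exact Or.inl (Or.inl hxU)
    by_cases hx' : U.min' hne < x ∧ x < U.max' hne
    · exact Or.inr (exists_mem_gaps (min'_mem U hne) (max'_mem U hne) hx'.1 hx'.2 hxU)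
    · have : x ≠ U.min' hne := fun h => hxU (h ▸ min'_mem U hne)
      have : x ≠ U.max' hne := fun h => hxU (h ▸ max'_mem U hne)
      omega
  · refine (sum_union_le _ _ _).trans (add_le_add ?_ (sum_biUnion_le _ _ _))
    exact (sum_union_le _ _ _).trans (add_le_add le_rfl (sum_union_le _ _ _))

end Runs

section Counting

open Finset

variable {μ : Measure (ℕ → ℤ → Bool)} {η : Config} {k : ℕ} {U : Finset ℤ}

lemma lintegral_numUnstable_evolve {W : Finset ℤ} (hW : ∀ ω x, Unstable (evolve ω η k) x → x ∈ W) :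
    ∫⁻ ω, (numUnstable (evolve ω η k) : ℝ≥0∞) ∂μ = ∑ x ∈ W, μ (unstableEvent η k x) := by
  have h : ∀ ω, (numUnstable (evolve ω η k) : ℝ≥0∞) =
      ∑ x ∈ W, (unstableEvent η k x).indicator 1 ω := by
    intro ω
    have hset : {x | Unstable (evolve ω η k) x} =
        ↑(W.filter fun x => Unstable (evolve ω η k) x) := by
      ext x
      simpa using fun hx => hW ω x hx
    rw [numUnstable, hset, Set.encard_coe_eq_coe_finsetCard, ENat.toENNReal_coe, card_filter,
      Nat.cast_sum]
    refine sum_congr rfl fun x _ => ?_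
    by_cases hx : Unstable (evolve ω η k) x <;> simp [unstableEvent, hx]
  simp_rw [h]
  rw [lintegral_finsetSum _ fun x _ => measurable_one.indicator (measurableSet_unstableEvent η k x)]
  simp_rw [lintegral_indicator_one (measurableSet_unstableEvent η k _)]

lemma three_mul_add_mul_le {p q : ℝ≥0∞} {i e n : ℕ} (hpq : p ≤ q) (hn : i + e = n)
    (he : 3 * e ≤ 2 * n) : 3 * (i * p + e * q) ≤ (p + 2 * q) * n := by
  obtain ⟨c, hc⟩ : ∃ c, 2 * n = 3 * e + c := ⟨2 * n - 3 * e, by omega⟩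
  have hi : ((3 * i : ℕ) : ℝ≥0∞) = n + c := by norm_cast; omega
  have hc' : ((2 * n : ℕ) : ℝ≥0∞) = 3 * e + c := by exact_mod_cast hc
  calc 3 * (i * p + e * q) = ((3 * i : ℕ) : ℝ≥0∞) * p + 3 * e * q := by push_cast; ring
    _ = n * p + c * p + 3 * e * q := by rw [hi]; ring
    _ ≤ n * p + c * q + 3 * e * q := by gcongr
    _ = (p + 2 * q) * n := by
      rw [add_assoc, ← add_mul, add_comm (c : ℝ≥0∞), ← hc']; push_cast; ring

lemma three_mul_sum_measure_unstableEvent_le (hμ : IIDCoins μ)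
    (hU : ∀ x, x ∈ U ↔ Unstable η x) :
    3 * ∑ x ∈ U, μ (unstableEvent η k x) ≤ (pIII μ k + 2 * pI μ k) * #U := by
  set ends := U.filter fun x => x - 1 ∉ U ∨ x + 1 ∉ U
  set inner := U.filter fun x => ¬ (x - 1 ∉ U ∨ x + 1 ∉ U)
  have hsum : ∑ x ∈ U, μ (unstableEvent η k x) ≤ #inner * pIII μ k + #ends * pI μ k := by
    rw [← sum_filter_not_add_sum_filter U fun x => x - 1 ∉ U ∨ x + 1 ∉ U, ← nsmul_eq_mul,
      ← nsmul_eq_mul]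
    refine add_le_add (sum_le_card_nsmul _ _ _ fun x hx => ?_)
      (sum_le_card_nsmul _ _ _ fun x hx => ?_)
    · obtain ⟨hxU, hx⟩ := mem_filter.1 hx
      simp only [not_or, not_not] at hx
      exact measure_unstableEvent_le_pIII hμ ((hU _).1 hx.1) ((hU _).1 hxU) ((hU _).1 hx.2)
    · exact measure_unstableEvent_le_pI hμ ((hU _).1 (mem_filter.1 hx).1)
  calc 3 * ∑ x ∈ U, μ (unstableEvent η k x) ≤ 3 * (#inner * pIII μ k + #ends * pI μ k) := by
        gcongr
    _ ≤ (pIII μ k + 2 * pI μ k) * #U :=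
        three_mul_add_mul_le (pIII_le_pI μ k)
          ((add_comm _ _).trans (card_filter_add_card_filter_not _)) (three_mul_card_ends_le hU)

lemma lintegral_numUnstable_le (hμ : IIDCoins μ) (hk : 1 ≤ k)
    (hU : ∀ x, x ∈ U ↔ Unstable η x) (hne : U.Nonempty) :
    ∫⁻ ω, (numUnstable (evolve ω η k) : ℝ≥0∞) ∂μ ≤
      ∑ x ∈ U, μ (unstableEvent η k x) + #(U.filter fun x => x - 1 ∉ U) * maxWindowSum μ k := by
  set a := U.min' hne
  set b := U.max' hne
  have ha : ∀ u ∈ U, a ≤ u := fun u hu => min'_le U u hu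
  have hb : ∀ u ∈ U, u ≤ b := fun u hu => le_max' U u hu
  set f := fun x => μ (unstableEvent η k x)
  have hW : ∀ ω x, Unstable (evolve ω η k) x → x ∈ Icc (a - 2 * k) (b + 2 * k) := by
    intro ω x hx
    obtain ⟨y, hy, hyu⟩ := exists_unstable_near_of_unstable_evolve hx
    have := ha y ((hU y).2 hyu)
    have := hb y ((hU y).2 hyu)
    simp only [Set.mem_Icc] at hy
    simp only [mem_Icc]
    omega
  have hgap : ∀ p ∈ gaps U, ∑ x ∈ Ioo p.1 p.2, f x ≤ maxWindowSum μ k := by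
    intro p hp
    obtain ⟨⟨hp₁, hp₂⟩, hp, hpU⟩ : (p.1 ∈ U ∧ p.2 ∈ U) ∧ p.1 + 1 < p.2 ∧
        ∀ u ∈ U, u ≤ p.1 ∨ p.2 ≤ u := by simpa [gaps] using hp
    refine sum_gap_le_maxWindowSum hμ hk ((hU _).1 hp₁) ((hU _).1 hp₂) hp fun y hy hyu => ?_
    have := hpU y ((hU y).2 hyu)
    simp only [Set.mem_Ioo] at hy
    omega
  have houter : ∑ x ∈ Icc (b + 1) (b + 2 * k), f x + ∑ x ∈ Icc (a - 2 * k) (a - 1), f x ≤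
      maxWindowSum μ k :=
    sum_near_unstable_le_maxWindowSum hμ hk ((hU b).1 (max'_mem U hne))
      (fun y hy hyu => by have := hb y ((hU y).2 hyu); simp only [Set.mem_Ioc] at hy; omega)
      ((hU a).1 (min'_mem U hne))
      (fun y hy hyu => by have := ha y ((hU y).2 hyu); simp only [Set.mem_Ico] at hy; omega)
  have hcard : #(gaps U) + 1 ≤ #(U.filter fun x => x - 1 ∉ U) := card_gaps_lt hne
  rw [lintegral_numUnstable_evolve hW]
  calc ∑ x ∈ Icc (a - 2 * k) (b + 2 * k), f x
      ≤ ∑ x ∈ U, f x + (∑ x ∈ Icc (b + 1) (b + 2 * k), f x + ∑ x ∈ Icc (a - 2 * k) (a - 1), f x)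
          + ∑ p ∈ gaps U, ∑ x ∈ Ioo p.1 p.2, f x := sum_Icc_le_sum_add_sum_gaps hne _ f
    _ ≤ ∑ x ∈ U, f x + maxWindowSum μ k + #(gaps U) * maxWindowSum μ k := by
        gcongr
        rw [← nsmul_eq_mul]
        exact sum_le_card_nsmul _ _ _ hgap
    _ ≤ ∑ x ∈ U, f x + #(U.filter fun x => x - 1 ∉ U) * maxWindowSum μ k := by
        rw [add_assoc, ← one_add_mul, add_comm 1]
        gcongr
        exact_mod_cast hcard

end Counting

theorem expected_unstable_bound_general (μ : Measure (ℕ → ℤ → Bool))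
    (hμ : IIDCoins μ) (k : ℕ) (hk : 1 ≤ k) (η : Config)
    (hfin : {x : ℤ | Unstable η x}.Finite)
    (hne : {x : ℤ | Unstable η x}.Nonempty) :
    ∫⁻ ω, (numUnstable (evolve ω η k) : ℝ≥0∞) ∂μ ≤
      ((1 / 3 : ℝ≥0∞) * pIII μ k + (2 / 3 : ℝ≥0∞) * pI μ k +
        (1 / 3 : ℝ≥0∞) * (Finset.Icc 1 (4 * k)).sup
          (fun g => ∑ i ∈ Finset.Icc 1 g, pS μ k ((i - 1 : ℕ) : ℕ∞) ((g - i : ℕ) : ℕ∞)))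
        * (numUnstable η : ℝ≥0∞) := by
  change _ ≤ ((1 / 3) * pIII μ k + (2 / 3) * pI μ k + (1 / 3) * maxWindowSum μ k) * _
  set U := hfin.toFinset
  set runs := (U.filter fun x => x - 1 ∉ U).card
  have hU : ∀ x, x ∈ U ↔ Unstable η x := fun x => hfin.mem_toFinset
  have hsites := three_mul_sum_measure_unstableEvent_le (k := k) hμ hU
  have hruns : (3 * runs : ℝ≥0∞) ≤ U.card := by exact_mod_cast three_mul_card_leftEnds_le hU
  rw [show (numUnstable η : ℝ≥0∞) = U.card by
      simp [numUnstable, hfin.encard_eq_coe_toFinset_card, U],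
    show ∀ A B C : ℝ≥0∞, ((1 / 3) * A + (2 / 3) * B + (1 / 3) * C) * U.card =
      (A + 2 * B + C) * U.card / 3 by intros; simp only [div_eq_mul_inv]; ring,
    ENNReal.le_div_iff_mul_le (by norm_num) (by norm_num)]
  calc (∫⁻ ω, (numUnstable (evolve ω η k) : ℝ≥0∞) ∂μ) * 3
      ≤ (∑ x ∈ U, μ (unstableEvent η k x) + runs * maxWindowSum μ k) * 3 := by
        gcongr
        exact lintegral_numUnstable_le hμ hk hU (hfin.toFinset_nonempty.2 hne)
    _ = 3 * ∑ x ∈ U, μ (unstableEvent η k x) + 3 * runs * maxWindowSum μ k := by ring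
    _ ≤ (pIII μ k + 2 * pI μ k) * U.card + U.card * maxWindowSum μ k := by gcongr
    _ = (pIII μ k + 2 * pI μ k + maxWindowSum μ k) * U.card := by ring

/-- the supermartingale-type bound
`E[I(R^k(η))] ≤ ((1/3) p_k^{III} + (2/3) p_k^I + (1/3) max_{1 ≤ g ≤ 4k} Σ_{i=1}^g p_k^S(i-1, g-i)) I(η)`
for configurations with finitely many (and at least one) unstable sites. -/
theorem expected_unstable_bound (μ : Measure (ℕ → ℤ → Bool)) [IsProbabilityMeasure μ]
    (hμ : IIDCoins μ) (k : ℕ) (hk : 1 ≤ k) (η : Config)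
    (hfin : {x : ℤ | Unstable η x}.Finite)
    (hne : {x : ℤ | Unstable η x}.Nonempty) :
    ∫⁻ ω, (numUnstable (evolve ω η k) : ℝ≥0∞) ∂μ ≤
      ((1 / 3 : ℝ≥0∞) * pIII μ k + (2 / 3 : ℝ≥0∞) * pI μ k +
        (1 / 3 : ℝ≥0∞) * (Finset.Icc 1 (4 * k)).sup
          (fun g => ∑ i ∈ Finset.Icc 1 g, pS μ k ((i - 1 : ℕ) : ℕ∞) ((g - i : ℕ) : ℕ∞)))
        * (numUnstable η : ℝ≥0∞) :=
  expected_unstable_bound_general μ hμ k hk η hfin hne
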